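/- In the reduction instance, for every path π=⟨v_0,…,v_k⟩ with v_0 = a_1 and every admissible timing profile T for π, the total reward satisfies R(π,T) ≤ 1 + K/κ_n. -/
import Mathlib


open MeasureTheory
open scoped Classical

/-- Vertices of the reduction instance: for each hexagon index `i` the vertices
`a i, b i, c i, d i, e i, f i`, plus the two special vertices `u` and `w`. -/
inductive RVert : Type
  | a : ℕ → RVert
  | b : ℕ → RVert
  | c : ℕ → RVert
  | d : ℕ → RVert
  | e : ℕ → RVert
  | f : ℕ → RVert
  | u : RVert
  | w : RVert
deriving DecidableEq

/-- `κ_i = Σ_{j=1}^{i} x_j` (so `κ_0 = 0`). -/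
def kap (x : ℕ → ℕ) (i : ℕ) : ℕ := ∑ j ∈ Finset.Icc 1 i, x j

/-- `y_i = Σ_{j=1}^{i-1} κ_j` (so `y_0 = y_1 = 0`). -/
def yv (x : ℕ → ℕ) (i : ℕ) : ℕ := ∑ j ∈ Finset.Icc 1 (i - 1), kap x j

/-- `α_i = x_i / κ_n`. -/
noncomputable def alphav (x : ℕ → ℕ) (n i : ℕ) : ℝ := (x i : ℝ) / (kap x n : ℝ)

/-- Edges of the reduction instance: `a_i→b_i, b_i→c_i, c_i→f_i, a_i→d_i,
d_i→e_i, e_i→f_i` for `1 ≤ i ≤ n`, `f_i→a_{i+1}` for `i < n`, `f_n→u`, `u→w`. -/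
def redE (n : ℕ) : RVert → RVert → Prop := fun p q =>
  (∃ i, 1 ≤ i ∧ i ≤ n ∧
    ((p = RVert.a i ∧ q = RVert.b i) ∨ (p = RVert.b i ∧ q = RVert.c i) ∨
     (p = RVert.c i ∧ q = RVert.f i) ∨ (p = RVert.a i ∧ q = RVert.d i) ∨
     (p = RVert.d i ∧ q = RVert.e i) ∨ (p = RVert.e i ∧ q = RVert.f i))) ∨
  (∃ i, 1 ≤ i ∧ i < n ∧ p = RVert.f i ∧ q = RVert.a (i + 1)) ∨
  (p = RVert.f n ∧ q = RVert.u) ∨ (p = RVert.u ∧ q = RVert.w)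

/-- Edge lengths: `ℓ(b_i, c_i) = κ_i`, `ℓ(d_i, e_i) = κ_{i-1}`, all other edges
have length `0`. -/
noncomputable def redLen (x : ℕ → ℕ) : RVert → RVert → ℝ := fun p q =>
  match p, q with
  | RVert.b i, RVert.c j => if i = j then (kap x i : ℝ) else 0
  | RVert.d i, RVert.e j => if i = j then (kap x (i - 1) : ℝ) else 0
  | _, _ => 0

/-- Assistance intervals: `𝓘(b_i) = 𝓘(c_i) = {[y_i, y_i + α_i]}` for
`1 ≤ i ≤ n`, `𝓘(w) = {[y_n + K, y_n + K + 1]}`, and `𝓘` is empty elsewhere. -/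
noncomputable def redI (x : ℕ → ℕ) (n K : ℕ) : RVert → Finset (ℝ × ℝ) := fun p =>
  match p with
  | RVert.b i =>
      if 1 ≤ i ∧ i ≤ n then {((yv x i : ℝ), (yv x i : ℝ) + alphav x n i)} else ∅
  | RVert.c i =>
      if 1 ≤ i ∧ i ≤ n then {((yv x i : ℝ), (yv x i : ℝ) + alphav x n i)} else ∅
  | RVert.w => {((yv x n : ℝ) + K, (yv x n : ℝ) + K + 1)}
  | _ => ∅

/-- `v 0, v 1, …, v k` is a path in the reduction instance. -/
def rIsPath (n : ℕ) (v : ℕ → RVert) (k : ℕ) : Prop :=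
  ∀ i, i < k → redE n (v i) (v (i + 1))

/-- `ℓ_π(v_i)`: length of the path from `v 0` to `v i`. -/
noncomputable def rPathLen (x : ℕ → ℕ) (v : ℕ → RVert) (i : ℕ) : ℝ :=
  ∑ j ∈ Finset.range i, redLen x (v j) (v (j + 1))

/-- `ℓ⁺_π(v_i)` (with the convention `ℓ(v_k, v_{k+1}) = 0`). -/
noncomputable def rEllPlus (x : ℕ → ℕ) (v : ℕ → RVert) (k i : ℕ) : ℝ :=
  rPathLen x v i + (if i < k then redLen x (v i) (v (i + 1)) / 2 else 0)

/-- Reward at a vertex `p` between times `t` and `t'`: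
`R(p, t, t') = Σ_{I ∈ 𝓘(p)} λ([t,t'] ∩ I)`. -/
noncomputable def rvReward (x : ℕ → ℕ) (n K : ℕ) (p : RVert) (t t' : ℝ) : ℝ :=
  ∑ q ∈ redI x n K p, (volume (Set.Icc t t' ∩ Set.Icc q.1 q.2)).toReal

/-- `T 0, …, T (k-1)` is a timing profile for the path `v 0, …, v k` with time
horizon `H = y_n + K + 1`. -/
def rIsTP (x : ℕ → ℕ) (v : ℕ → RVert) (k : ℕ) (H : ℝ) (T : ℕ → ℝ) : Prop :=
  (1 ≤ k → rEllPlus x v k 0 ≤ T 0) ∧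
  (∀ i, i + 2 ≤ k → T i + (rEllPlus x v k (i + 1) - rEllPlus x v k i) ≤ T (i + 1)) ∧
  (1 ≤ k → T (k - 1) + (rEllPlus x v k k - rEllPlus x v k (k - 1)) ≤ H)

/-- Reward of a timing profile over horizon `H`:
`R(π, T) = Σ_{i=0}^{k} R(v_i, t_{i-1}, t_i)` with `t_{-1} = 0`, `t_k = H`. -/
noncomputable def rProfReward (x : ℕ → ℕ) (n K : ℕ) (v : ℕ → RVert) (k : ℕ)
    (H : ℝ) (T : ℕ → ℝ) : ℝ :=
  ∑ i ∈ Finset.range (k + 1),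
    rvReward x n K (v i) (if i = 0 then 0 else T (i - 1)) (if i = k then H else T i)

/-- Admissibility: the robot leaves `u` by time `y_n + K` and the path does not
end at `u`. -/
def rAdmissible (x : ℕ → ℕ) (n K : ℕ) (v : ℕ → RVert) (k : ℕ) (T : ℕ → ℝ) : Prop :=
  (∀ i, i < k → v i = RVert.u → T i ≤ (yv x n : ℝ) + K) ∧ v k ≠ RVert.u

lemma redLen_nonneg (x : ℕ → ℕ) (p q : RVert) : 0 ≤ redLen x p q := by
  cases p <;> cases q <;> simp [redLen] <;> split_ifs <;> positivity

lemma kap_succ (x : ℕ → ℕ) (m : ℕ) : kap x (m+1) = kap x m + x (m+1) := by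
  rw [kap, kap, Finset.sum_Icc_succ_top (Nat.succ_le_succ (Nat.zero_le m))]

lemma yv_step (x : ℕ → ℕ) (l : ℕ) : yv x (l+1) = yv x l + kap x l := by
  cases l with
  | zero => simp [yv, kap]
  | succ m =>
      show (∑ j ∈ Finset.Icc 1 (m+1), kap x j) = (∑ j ∈ Finset.Icc 1 m, kap x j) + kap x (m+1)
      exact Finset.sum_Icc_succ_top (Nat.succ_le_succ (Nat.zero_le m)) _

noncomputable def clampf (c d t : ℝ) : ℝ := max c (min t d)

lemma clampf_mono (c d : ℝ) {s t : ℝ} (h : s ≤ t) : clampf c d s ≤ clampf c d t :=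
  max_le_max le_rfl (min_le_min h le_rfl)

lemma clampf_le (c d t : ℝ) (hcd : c ≤ d) : clampf c d t ≤ d := max_le hcd (min_le_right _ _)
lemma le_clampf (c d t : ℝ) : c ≤ clampf c d t := le_max_left _ _

lemma vol_Icc_inter (s t c d : ℝ) (hst : s ≤ t) (hcd : c ≤ d) :
    (MeasureTheory.volume (Set.Icc s t ∩ Set.Icc c d)).toReal = clampf c d t - clampf c d s := by
  rw [Set.Icc_inter_Icc, Real.volume_Icc]
  rcases le_total (max s c) (min t d) with h | h
  · rw [ENNReal.toReal_ofReal (by linarith)]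
    simp only [max_def, min_def] at h
    simp only [clampf, max_def, min_def]
    split_ifs at h ⊢ <;> linarith
  · rw [ENNReal.ofReal_of_nonpos (by linarith)]
    simp only [max_def, min_def] at h
    simp only [ENNReal.toReal_zero, clampf, max_def, min_def]
    split_ifs at h ⊢ <;> linarith
noncomputable def gg (x : ℕ → ℕ) (n : ℕ) : RVert → ℝ := fun p =>
  match p with
  | RVert.a j => (yv x (j-1) : ℝ)
  | RVert.b j => (yv x (j-1) : ℝ)
  | RVert.c j => (yv x j : ℝ)
  | RVert.d j => (yv x (j-1) : ℝ)
  | RVert.e j => (yv x j : ℝ)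
  | RVert.f j => (yv x j : ℝ)
  | RVert.u => (yv x n : ℝ)
  | RVert.w => (yv x n : ℝ)

noncomputable def surV (x : ℕ → ℕ) : RVert → ℝ := fun p =>
  match p with
  | RVert.b j => (x j : ℝ)
  | _ => 0

lemma surV_nonneg (x : ℕ → ℕ) (p : RVert) : 0 ≤ surV x p := by
  cases p <;> simp [surV]

lemma edge_bound (x : ℕ → ℕ) (n : ℕ) {p q : RVert} (hE : redE n p q) :
    gg x n q - gg x n p + surV x p ≤ redLen x p q := by
  rcases hE with ⟨i, h1, h2, hc⟩ | ⟨i, h1, h2, hp, hq⟩ | ⟨hp, hq⟩ | ⟨hp, hq⟩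
  · obtain ⟨l, rfl⟩ : ∃ l, i = l + 1 := ⟨i - 1, by omega⟩
    rcases hc with ⟨hp,hq⟩|⟨hp,hq⟩|⟨hp,hq⟩|⟨hp,hq⟩|⟨hp,hq⟩|⟨hp,hq⟩ <;> subst hp <;> subst hq <;>
      simp [gg, surV, redLen, yv_step x l, kap_succ x l] <;> push_cast <;> linarith
  · subst hp; subst hq; simp [gg, surV, redLen]
  · subst hp; subst hq; simp [gg, surV, redLen]
  · subst hp; subst hq; simp [gg, surV, redLen]

lemma path_len_bound (x : ℕ → ℕ) (n : ℕ) (v : ℕ → RVert) (k m : ℕ) (hm : m ≤ k)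
    (hpath : rIsPath n v k) :
    gg x n (v m) - gg x n (v 0) + ∑ q ∈ Finset.range m, surV x (v q) ≤ rPathLen x v m := by
  have h1 : ∀ q ∈ Finset.range m,
      (gg x n (v (q+1)) - gg x n (v q)) + surV x (v q) ≤ redLen x (v q) (v (q+1)) := by
    intro q hq
    exact edge_bound x n (hpath q (lt_of_lt_of_le (Finset.mem_range.mp hq) hm))
  have h2 := Finset.sum_le_sum h1
  rw [Finset.sum_add_distrib, Finset.sum_range_sub (fun q => gg x n (v q))] at h2
  exact h2

lemma sum_ite_clamp (m : ℕ) (τ : ℕ → ℝ) (hmono : ∀ i, i < m → τ i ≤ τ (i+1))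
    (P : ℕ → Prop) [DecidablePred P] (c d : ℝ) (hcd : c ≤ d) :
    ∑ i ∈ Finset.range m, (if P i then clampf c d (τ (i+1)) - clampf c d (τ i) else 0)
      ≤ d - c := by
  have h1 : ∀ i ∈ Finset.range m,
      (if P i then clampf c d (τ (i+1)) - clampf c d (τ i) else 0)
        ≤ clampf c d (τ (i+1)) - clampf c d (τ i) := by
    intro i hi
    have := clampf_mono c d (hmono i (Finset.mem_range.mp hi))
    split_ifs <;> linarith
  calc ∑ i ∈ Finset.range m, (if P i then clampf c d (τ (i+1)) - clampf c d (τ i) else 0)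
      ≤ ∑ i ∈ Finset.range m, (clampf c d (τ (i+1)) - clampf c d (τ i)) :=
        Finset.sum_le_sum h1
    _ = clampf c d (τ m) - clampf c d (τ 0) := Finset.sum_range_sub (fun i => clampf c d (τ i)) m
    _ ≤ d - c := by
        have := clampf_le c d (τ m) hcd
        have := le_clampf c d (τ 0)
        linarith

lemma redE_from_w (n : ℕ) (q : RVert) : ¬ redE n RVert.w q := by
  rintro (⟨i, _, _, hc⟩ | ⟨i, _, _, hp, _⟩ | ⟨hp, _⟩ | ⟨hp, _⟩)
  · rcases hc with ⟨hp,_⟩|⟨hp,_⟩|⟨hp,_⟩|⟨hp,_⟩|⟨hp,_⟩|⟨hp,_⟩ <;> exact absurd hp (by simp)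
  · exact absurd hp (by simp)
  · exact absurd hp (by simp)
  · exact absurd hp (by simp)

lemma redE_into_w (n : ℕ) (p : RVert) (hE : redE n p RVert.w) : p = RVert.u := by
  rcases hE with ⟨i, _, _, hc⟩ | ⟨i, _, _, _, hq⟩ | ⟨_, hq⟩ | ⟨hp, _⟩
  · rcases hc with ⟨_,hq⟩|⟨_,hq⟩|⟨_,hq⟩|⟨_,hq⟩|⟨_,hq⟩|⟨_,hq⟩ <;> exact absurd hq (by simp)
  · exact absurd hq (by simp)
  · exact absurd hq (by simp)
  · exact hp

lemma redE_into_c (n j : ℕ) (p : RVert) (hE : redE n p (RVert.c j)) : p = RVert.b j := by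
  rcases hE with ⟨i, _, _, hc⟩ | ⟨i, _, _, _, hq⟩ | ⟨_, hq⟩ | ⟨_, hq⟩
  · rcases hc with ⟨hp,hq⟩|⟨hp,hq⟩|⟨hp,hq⟩|⟨hp,hq⟩|⟨hp,hq⟩|⟨hp,hq⟩ <;> simp_all
  · exact absurd hq (by simp)
  · exact absurd hq (by simp)
  · exact absurd hq (by simp)
/-- **Lemma 6.** For every path from `a_1` and every admissible
timing profile, the total reward is at most `1 + K/κ_n`. -/
theorem stmt15 (n : ℕ) (hn : 1 ≤ n) (x : ℕ → ℕ)
    (hx : ∀ i, 1 ≤ i → i ≤ n → 0 < x i)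
    (hmono : ∀ i j, 1 ≤ i → i ≤ j → j ≤ n → x i ≤ x j)
    (K : ℕ) (hK : 0 < K) (hKn : K ≤ kap x n)
    (v : ℕ → RVert) (k : ℕ) (hpath : rIsPath n v k) (h0 : v 0 = RVert.a 1)
    (T : ℕ → ℝ) (hT : rIsTP x v k ((yv x n : ℝ) + K + 1) T)
    (hadm : rAdmissible x n K v k T) :
    rProfReward x n K v k ((yv x n : ℝ) + K + 1) T ≤ 1 + (K : ℝ) / (kap x n : ℝ) := by
  classical
  have hknat : 0 < kap x n :=
    lt_of_lt_of_le (hx 1 le_rfl hn)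
      (Finset.single_le_sum (f := fun i => x i) (fun i _ => Nat.zero_le _)
        (Finset.mem_Icc.mpr ⟨le_rfl, hn⟩))
  have hkpos : 0 < (kap x n : ℝ) := by exact_mod_cast hknat
  have han : ∀ j, 0 ≤ alphav x n j := fun j => div_nonneg (Nat.cast_nonneg _) hkpos.le
  have hPL_nonneg : ∀ i, 0 ≤ rPathLen x v i := fun i =>
    Finset.sum_nonneg fun q _ => redLen_nonneg x _ _
  have hEll_nonneg : ∀ i, 0 ≤ rEllPlus x v k i := by
    intro i
    unfold rEllPlus
    have h1 := hPL_nonneg i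
    split_ifs with h
    · have := redLen_nonneg x (v i) (v (i+1)); linarith
    · linarith
  have hEll_mono : ∀ i, i < k → rEllPlus x v k i ≤ rEllPlus x v k (i+1) := by
    intro i hik
    have hsucc : rPathLen x v (i+1) = rPathLen x v i + redLen x (v i) (v (i+1)) :=
      Finset.sum_range_succ _ i
    have l1 := redLen_nonneg x (v i) (v (i+1))
    have l2 := redLen_nonneg x (v (i+1)) (v (i+2))
    unfold rEllPlus
    rw [hsucc, if_pos hik]
    split_ifs with h2
    · linarith
    · linarith
  set τ : ℕ → ℝ :=
    fun i => if i = 0 then 0 else if k + 1 ≤ i then (yv x n : ℝ) + K + 1 else T (i-1) with hτdef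
  have hτ0 : τ 0 = 0 := by simp [hτdef]
  have hτmid : ∀ i, 1 ≤ i → i ≤ k → τ i = T (i-1) := by
    intro i h1 h2
    simp only [hτdef]
    rw [if_neg (by omega), if_neg (by omega)]
  have hτtop : τ (k+1) = (yv x n : ℝ) + K + 1 := by
    simp only [hτdef]
    rw [if_neg (by omega), if_pos (by omega)]
  have hTlow : ∀ i, i + 1 ≤ k → rEllPlus x v k i ≤ T i := by
    intro i
    induction i with
    | zero => intro h; exact hT.1 h
    | succ l ih =>
        intro h
        have h2 := hT.2.1 l h
        have h3 := ih (by omega)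
        linarith
  have hτmono : ∀ i, i < k + 1 → τ i ≤ τ (i+1) := by
    intro i hi
    rcases Nat.eq_zero_or_pos i with rfl | hpos
    · rw [hτ0]
      rcases Nat.eq_zero_or_pos k with rfl | hk
      · rw [hτtop]; positivity
      · rw [hτmid 1 le_rfl hk]
        have h1 := hTlow 0 hk
        have h2 := hEll_nonneg 0
        simpa using le_trans h2 h1
    · rcases Nat.lt_or_ge i k with hik | hik
      · rw [hτmid i hpos hik.le, hτmid (i+1) (by omega) (by omega)]
        obtain ⟨l, rfl⟩ : ∃ l, i = l + 1 := ⟨i-1, by omega⟩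
        have h2 := hT.2.1 l (by omega)
        have h3 := hEll_mono l (by omega)
        simp only [Nat.add_sub_cancel]
        linarith
      · have hieq : i = k := by omega
        subst hieq
        rw [hτmid i hpos le_rfl, hτtop]
        have h2 := hT.2.2 hpos
        have h3 := hEll_mono (i-1) (by omega)
        rw [(by omega : i - 1 + 1 = i)] at h3
        linarith
  have hrw : rProfReward x n K v k ((yv x n : ℝ) + K + 1) T =
      ∑ i ∈ Finset.range (k+1), rvReward x n K (v i) (τ i) (τ (i+1)) := by
    unfold rProfReward
    apply Finset.sum_congr rfl
    intro i hi
    have hik : i ≤ k := Nat.lt_succ_iff.mp (Finset.mem_range.mp hi)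
    congr 1
    · rcases Nat.eq_zero_or_pos i with rfl | hpos
      · rw [hτ0]; simp
      · rw [hτmid i hpos hik, if_neg (by omega)]
    · rcases Nat.lt_or_ge i k with h | h
      · rw [hτmid (i+1) (by omega) (by omega), if_neg (by omega)]
        simp
      · have hieq : i = k := by omega
        subst hieq
        rw [hτtop, if_pos rfl]
  have key : ∀ i, i < k+1 →
      rvReward x n K (v i) (τ i) (τ (i+1)) ≤
        (∑ j ∈ Finset.Icc 1 n,
          if v i = RVert.b j ∨ v i = RVert.c j then
            clampf (yv x j) ((yv x j : ℝ) + alphav x n j) (τ (i+1)) -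
            clampf (yv x j) ((yv x j : ℝ) + alphav x n j) (τ i)
          else 0)
        + (if v i = RVert.w then
            clampf ((yv x n : ℝ) + K) ((yv x n : ℝ) + K + 1) (τ (i+1)) -
            clampf ((yv x n : ℝ) + K) ((yv x n : ℝ) + K + 1) (τ i)
          else 0) := by
    intro i hi
    have hst : τ i ≤ τ (i+1) := hτmono i hi
    have hnnB : ∀ j' : ℕ, (0:ℝ) ≤
        (if v i = RVert.b j' ∨ v i = RVert.c j' then
            clampf (yv x j') ((yv x j' : ℝ) + alphav x n j') (τ (i+1)) -
            clampf (yv x j') ((yv x j' : ℝ) + alphav x n j') (τ i)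
          else 0) := by
      intro j'
      split_ifs
      · exact sub_nonneg.mpr (clampf_mono _ _ hst)
      · exact le_rfl
    have hnnW : (0:ℝ) ≤
        (if v i = RVert.w then
            clampf ((yv x n : ℝ) + K) ((yv x n : ℝ) + K + 1) (τ (i+1)) -
            clampf ((yv x n : ℝ) + K) ((yv x n : ℝ) + K + 1) (τ i)
          else 0) := by
      split_ifs
      · exact sub_nonneg.mpr (clampf_mono _ _ hst)
      · exact le_rfl
    have hnnSum : (0:ℝ) ≤ ∑ j ∈ Finset.Icc 1 n,
        (if v i = RVert.b j ∨ v i = RVert.c j then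
            clampf (yv x j) ((yv x j : ℝ) + alphav x n j) (τ (i+1)) -
            clampf (yv x j) ((yv x j : ℝ) + alphav x n j) (τ i)
          else 0) := Finset.sum_nonneg fun j _ => hnnB j
    rcases hv : v i with j | j | j | j | j | j | _ | _
    · rw [hv] at hnnSum hnnW
      simp only [rvReward, redI, Finset.sum_empty]
      exact add_nonneg hnnSum hnnW
    · -- b j
      rw [hv] at hnnSum hnnW
      by_cases hj : 1 ≤ j ∧ j ≤ n
      · have hL : rvReward x n K (RVert.b j) (τ i) (τ (i+1)) =
            clampf (yv x j) ((yv x j : ℝ) + alphav x n j) (τ (i+1)) -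
            clampf (yv x j) ((yv x j : ℝ) + alphav x n j) (τ i) := by
          simp only [rvReward, redI, if_pos hj, Finset.sum_singleton]
          exact vol_Icc_inter _ _ _ _ hst (by linarith [han j])
        rw [hL]
        have hmem : j ∈ Finset.Icc 1 n := Finset.mem_Icc.mpr hj
        have h1 := Finset.single_le_sum (s := Finset.Icc 1 n)
          (f := fun j' => if RVert.b j = RVert.b j' ∨ RVert.b j = RVert.c j' then
              clampf (yv x j') ((yv x j' : ℝ) + alphav x n j') (τ (i+1)) -
              clampf (yv x j') ((yv x j' : ℝ) + alphav x n j') (τ i)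
            else 0)
          (fun j' _ => by
            split_ifs <;>
              first
                | exact sub_nonneg.mpr (clampf_mono _ _ hst)
                | exact le_rfl) hmem
        rw [if_pos (Or.inl rfl)] at h1
        linarith
      · simp only [rvReward, redI, if_neg hj, Finset.sum_empty]
        exact add_nonneg hnnSum hnnW
    · -- c j
      rw [hv] at hnnSum hnnW
      by_cases hj : 1 ≤ j ∧ j ≤ n
      · have hL : rvReward x n K (RVert.c j) (τ i) (τ (i+1)) =
            clampf (yv x j) ((yv x j : ℝ) + alphav x n j) (τ (i+1)) -
            clampf (yv x j) ((yv x j : ℝ) + alphav x n j) (τ i) := by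
          simp only [rvReward, redI, if_pos hj, Finset.sum_singleton]
          exact vol_Icc_inter _ _ _ _ hst (by linarith [han j])
        rw [hL]
        have hmem : j ∈ Finset.Icc 1 n := Finset.mem_Icc.mpr hj
        have h1 := Finset.single_le_sum (s := Finset.Icc 1 n)
          (f := fun j' => if RVert.c j = RVert.b j' ∨ RVert.c j = RVert.c j' then
              clampf (yv x j') ((yv x j' : ℝ) + alphav x n j') (τ (i+1)) -
              clampf (yv x j') ((yv x j' : ℝ) + alphav x n j') (τ i)
            else 0)
          (fun j' _ => by
            split_ifs <;>
              first
                | exact sub_nonneg.mpr (clampf_mono _ _ hst)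
                | exact le_rfl) hmem
        rw [if_pos (Or.inr rfl)] at h1
        linarith
      · simp only [rvReward, redI, if_neg hj, Finset.sum_empty]
        exact add_nonneg hnnSum hnnW
    · rw [hv] at hnnSum hnnW
      simp only [rvReward, redI, Finset.sum_empty]
      exact add_nonneg hnnSum hnnW
    · rw [hv] at hnnSum hnnW
      simp only [rvReward, redI, Finset.sum_empty]
      exact add_nonneg hnnSum hnnW
    · rw [hv] at hnnSum hnnW
      simp only [rvReward, redI, Finset.sum_empty]
      exact add_nonneg hnnSum hnnW
    · rw [hv] at hnnSum hnnW
      simp only [rvReward, redI, Finset.sum_empty]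
      exact add_nonneg hnnSum hnnW
    · -- w
      rw [hv] at hnnSum hnnW
      have hL : rvReward x n K RVert.w (τ i) (τ (i+1)) =
          clampf ((yv x n : ℝ) + K) ((yv x n : ℝ) + K + 1) (τ (i+1)) -
          clampf ((yv x n : ℝ) + K) ((yv x n : ℝ) + K + 1) (τ i) := by
        simp only [rvReward, redI, Finset.sum_singleton]
        exact vol_Icc_inter _ _ _ _ hst (by linarith)
      rw [hL, if_pos rfl]
      linarith
  have hsplit : ∑ i ∈ Finset.range (k+1), rvReward x n K (v i) (τ i) (τ (i+1)) ≤
      (∑ j ∈ Finset.Icc 1 n, ∑ i ∈ Finset.range (k+1),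
        (if v i = RVert.b j ∨ v i = RVert.c j then
            clampf (yv x j) ((yv x j : ℝ) + alphav x n j) (τ (i+1)) -
            clampf (yv x j) ((yv x j : ℝ) + alphav x n j) (τ i)
          else 0))
      + ∑ i ∈ Finset.range (k+1),
        (if v i = RVert.w then
            clampf ((yv x n : ℝ) + K) ((yv x n : ℝ) + K + 1) (τ (i+1)) -
            clampf ((yv x n : ℝ) + K) ((yv x n : ℝ) + K + 1) (τ i)
          else 0) := by
    calc ∑ i ∈ Finset.range (k+1), rvReward x n K (v i) (τ i) (τ (i+1)) ≤
        ∑ i ∈ Finset.range (k+1),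
          ((∑ j ∈ Finset.Icc 1 n,
            (if v i = RVert.b j ∨ v i = RVert.c j then
              clampf (yv x j) ((yv x j : ℝ) + alphav x n j) (τ (i+1)) -
              clampf (yv x j) ((yv x j : ℝ) + alphav x n j) (τ i)
            else 0))
          + (if v i = RVert.w then
              clampf ((yv x n : ℝ) + K) ((yv x n : ℝ) + K + 1) (τ (i+1)) -
              clampf ((yv x n : ℝ) + K) ((yv x n : ℝ) + K + 1) (τ i)
            else 0)) :=
          Finset.sum_le_sum fun i hi => key i (Finset.mem_range.mp hi)
      _ = _ := by rw [Finset.sum_add_distrib, Finset.sum_comm]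
  have hWsum : ∑ i ∈ Finset.range (k+1),
      (if v i = RVert.w then
          clampf ((yv x n : ℝ) + K) ((yv x n : ℝ) + K + 1) (τ (i+1)) -
          clampf ((yv x n : ℝ) + K) ((yv x n : ℝ) + K + 1) (τ i)
        else 0) ≤ 1 := by
    have h := sum_ite_clamp (k+1) τ hτmono (fun i => v i = RVert.w)
      ((yv x n : ℝ) + K) ((yv x n : ℝ) + K + 1) (by linarith)
    linarith
  set S : Finset ℕ := (Finset.Icc 1 n).filter
    (fun j => ∃ i, i ≤ k ∧ (v i = RVert.b j ∨ v i = RVert.c j)) with hS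
  have hB : (∑ j ∈ Finset.Icc 1 n, ∑ i ∈ Finset.range (k+1),
      (if v i = RVert.b j ∨ v i = RVert.c j then
          clampf (yv x j) ((yv x j : ℝ) + alphav x n j) (τ (i+1)) -
          clampf (yv x j) ((yv x j : ℝ) + alphav x n j) (τ i)
        else 0)) ≤ ∑ j ∈ S, alphav x n j := by
    have hBsum : ∀ j ∈ Finset.Icc 1 n,
        (∑ i ∈ Finset.range (k+1),
          (if v i = RVert.b j ∨ v i = RVert.c j then
            clampf (yv x j) ((yv x j : ℝ) + alphav x n j) (τ (i+1)) -
            clampf (yv x j) ((yv x j : ℝ) + alphav x n j) (τ i)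
          else 0)) ≤ (if j ∈ S then alphav x n j else 0) := by
      intro j hjmem
      by_cases hjS : j ∈ S
      · rw [if_pos hjS]
        have h := sum_ite_clamp (k+1) τ hτmono
          (fun i => v i = RVert.b j ∨ v i = RVert.c j)
          (yv x j) ((yv x j : ℝ) + alphav x n j) (by linarith [han j])
        linarith
      · rw [if_neg hjS]
        apply le_of_eq
        apply Finset.sum_eq_zero
        intro i hi
        rw [if_neg]
        intro hcon
        exact hjS (Finset.mem_filter.mpr
          ⟨hjmem, ⟨i, Nat.lt_succ_iff.mp (Finset.mem_range.mp hi), hcon⟩⟩)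
    calc _ ≤ ∑ j ∈ Finset.Icc 1 n, (if j ∈ S then alphav x n j else 0) :=
          Finset.sum_le_sum hBsum
      _ = ∑ j ∈ S, alphav x n j := by
          rw [Finset.sum_ite_mem,
            Finset.inter_eq_right.mpr (by rw [hS]; exact Finset.filter_subset _ _)]
  have hαS_le_one : ∑ j ∈ S, alphav x n j ≤ 1 := by
    have h1 : ∑ j ∈ S, alphav x n j ≤ ∑ j ∈ Finset.Icc 1 n, alphav x n j :=
      Finset.sum_le_sum_of_subset_of_nonneg (Finset.filter_subset _ _) (fun j _ _ => han j)
    have h2 : ∑ j ∈ Finset.Icc 1 n, alphav x n j = 1 := by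
      unfold alphav
      rw [← Finset.sum_div, div_eq_one_iff_eq (ne_of_gt hkpos)]
      rw [kap]
      push_cast
      rfl
    linarith
  by_cases hw : ∃ m, m ≤ k ∧ v m = RVert.w
  · obtain ⟨m, hmk, hvm⟩ := hw
    have hk1 : 1 ≤ k := by
      rcases Nat.eq_zero_or_pos k with rfl | h
      · obtain rfl : m = 0 := by omega
        rw [h0] at hvm
        cases hvm
      · exact h
    have hmkeq : m = k := by
      by_contra hne
      have hmlt : m < k := lt_of_le_of_ne hmk hne
      exact redE_from_w n _ (hvm ▸ hpath m hmlt)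
    subst hmkeq
    have hu : v (m-1) = RVert.u := by
      have hE := hpath (m-1) (by omega)
      rw [(by omega : m - 1 + 1 = m), hvm] at hE
      exact redE_into_w n _ hE
    have hTu : T (m-1) ≤ (yv x n : ℝ) + K := hadm.1 (m-1) (by omega) hu
    have hTl : rEllPlus x v m (m-1) ≤ T (m-1) := hTlow (m-1) (by omega)
    have hPL : rPathLen x v (m-1) ≤ rEllPlus x v m (m-1) := by
      unfold rEllPlus
      split_ifs with h
      · linarith [redLen_nonneg x (v (m-1)) (v (m-1+1))]
      · linarith
    have hgb := path_len_bound x n v m (m-1) (by omega) hpath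
    rw [hu, h0] at hgb
    have hgg0 : gg x n (RVert.a 1) = 0 := by simp [gg, yv]
    have hggu : gg x n (RVert.u) = (yv x n : ℝ) := rfl
    have hsur : ∑ q ∈ Finset.range (m-1), surV x (v q) ≤ (K : ℝ) := by
      rw [hgg0, hggu] at hgb
      linarith
    have hSx : ∑ j ∈ S, (x j : ℝ) ≤ ∑ q ∈ Finset.range (m-1), surV x (v q) := by
      have hpick : ∀ j ∈ S, ∃ q, q < m - 1 ∧ v q = RVert.b j := by
        intro j hjS
        obtain ⟨i, hik, hbc⟩ := (Finset.mem_filter.mp hjS).2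
        rcases hbc with hb | hc
        · refine ⟨i, ?_, hb⟩
          have h1 : i ≠ m := fun h => by rw [h, hvm] at hb; cases hb
          have h2 : i ≠ m - 1 := fun h => by rw [h, hu] at hb; cases hb
          omega
        · have hi0 : i ≠ 0 := fun h => by rw [h, h0] at hc; cases hc
          have hik' : i ≠ m := fun h => by rw [h, hvm] at hc; cases hc
          have hE := hpath (i-1) (by omega)
          rw [(by omega : i - 1 + 1 = i), hc] at hE
          have hb := redE_into_c n j _ hE
          refine ⟨i-1, ?_, hb⟩
          have h2 : i - 1 ≠ m - 1 := fun h => by rw [h, hu] at hb; cases hb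
          omega
      have hex : ∀ j, ∃ q, j ∈ S → (q < m - 1 ∧ v q = RVert.b j) := by
        intro j
        by_cases hjS : j ∈ S
        · obtain ⟨q, hq⟩ := hpick j hjS; exact ⟨q, fun _ => hq⟩
        · exact ⟨0, fun h => absurd h hjS⟩
      choose pos hpos using hex
      have hinj : ∀ j1 ∈ S, ∀ j2 ∈ S, pos j1 = pos j2 → j1 = j2 := by
        intro j1 h1 j2 h2 he
        have e1 := (hpos j1 h1).2
        have e2 := (hpos j2 h2).2
        rw [he, e2] at e1
        injection e1 with h
        omega
      calc ∑ j ∈ S, (x j : ℝ) = ∑ j ∈ S, surV x (v (pos j)) := by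
            apply Finset.sum_congr rfl
            intro j hj
            rw [(hpos j hj).2]
            simp [surV]
        _ = ∑ q ∈ S.image pos, surV x (v q) :=
            (Finset.sum_image (f := fun q => surV x (v q)) hinj).symm
        _ ≤ ∑ q ∈ Finset.range (m-1), surV x (v q) := by
            apply Finset.sum_le_sum_of_subset_of_nonneg
            · intro q hq
              obtain ⟨j, hjS, rfl⟩ := Finset.mem_image.mp hq
              exact Finset.mem_range.mpr (hpos j hjS).1
            · exact fun q _ _ => surV_nonneg x (v q)
    have hSα : ∑ j ∈ S, alphav x n j ≤ (K:ℝ) / (kap x n : ℝ) := by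
      unfold alphav
      rw [← Finset.sum_div]
      exact (div_le_div_iff_of_pos_right hkpos).mpr (le_trans hSx hsur)
    rw [hrw]
    linarith
  · have hWzero : ∑ i ∈ Finset.range (k+1),
        (if v i = RVert.w then
            clampf ((yv x n : ℝ) + K) ((yv x n : ℝ) + K + 1) (τ (i+1)) -
            clampf ((yv x n : ℝ) + K) ((yv x n : ℝ) + K + 1) (τ i)
          else 0) = 0 :=
      Finset.sum_eq_zero fun i hi =>
        if_neg (fun h => hw ⟨i, Nat.lt_succ_iff.mp (Finset.mem_range.mp hi), h⟩)
    have hdiv : (0:ℝ) ≤ (K:ℝ) / (kap x n : ℝ) := by positivity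
    rw [hrw]
    linarith
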